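/- Let {X_n} be i.i.d. random variables and ρ ∈ [0, ∞]. Then (log max_{1≤k≤n} X_k)/(log n) → 1/ρ almost surely if and only if (log max_{1≤k≤n} X_k)/(log n) → 1/ρ in probability. -/

import Mathlib

open MeasureTheory ProbabilityTheory Filter
open scoped ENNReal

/-- `log x = ln (e ∨ x)` as in the paper. -/
noncomputable def Log (x : ℝ) : ℝ := Real.log (max (Real.exp 1) x)

/-- `pmax X n ω = max_{1 ≤ k ≤ n} X_k(ω)` (indexed `0,…,n-1`), junk value at `n = 0`. -/
noncomputable def pmax {Ω : Type*} (X : ℕ → Ω → ℝ) (n : ℕ) (ω : Ω) : ℝ :=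
  if h : n = 0 then X 0 ω
  else (Finset.range n).sup' (Finset.nonempty_range_iff.mpr h) fun k => X k ω

/-!
Write `Mₙ = max_{k<n} X_k` and `T u = P(Log X₀ > u)`. By independence `P(Log Mₙ ≤ u) = (1 - T u)ⁿ`,
so convergence in probability of `Log Mₙ / Log n` controls the tail of `Log X₀`: if
`P(Log Mₙ > a Log n) → 0` then `n T(a Log n) ≤ 1` eventually, whence `T(a u) ≤ 2e⁻ᵘ` for large `u`;
if `P(Log Mₙ ≤ b Log n) → 0` then `n T(b Log n) ≥ 1/2` eventually, whence `T(b u) ≥ e⁻ᵘ/4`.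
For `0 < a < b` these bounds make the probabilities of the bad events along `n = 2ʲ` decay
geometrically (by the union bound, resp. by `(1 - T)^(2ʲ) ≤ exp (-2ʲ T)`), so by Borel–Cantelli
`a Log n < Log Mₙ ≤ b Log n` eventually along `2ʲ`, almost surely; as `Mₙ` is monotone and
`Log 2ʲ⁺¹ / Log 2ʲ → 1` this passes to all `n`. Running `a, b` through a countable dense set gives
almost sure convergence. The converse holds for every almost surely convergent sequence.
-/

open Set Topology

section Convergence

variable {Ω α ι : Type*} [MeasurableSpace Ω] {μ : Measure Ω} {l : Filter ι} {Z : ι → Ω → α}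
  {L : α}

theorem tendsto_measure_setOf_notMem_of_ae_tendsto [IsFiniteMeasure μ] [TopologicalSpace α]
    [MeasurableSpace α] [OpensMeasurableSpace α] [l.IsCountablyGenerated]
    (hZ : ∀ i, Measurable (Z i)) (h : ∀ᵐ ω ∂μ, Tendsto (Z · ω) l (𝓝 L)) {U : Set α} (hU : U ∈ 𝓝 L) :
    Tendsto (fun i => μ {ω | Z i ω ∉ U}) l (𝓝 0) := by
  obtain ⟨V, hVU, hV, hLV⟩ := mem_nhds_iff.1 hU
  have hV0 : Tendsto (fun i => μ (Z i ⁻¹' Vᶜ)) l (𝓝 0) := by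
    simpa using tendsto_measure_of_ae_tendsto_indicator_of_isFiniteMeasure l
      MeasurableSet.empty (fun i => hZ i hV.measurableSet.compl) (by
        filter_upwards [h] with ω hω
        filter_upwards [hω (hV.mem_nhds hLV)] with i hi
        simpa using hi)
  exact tendsto_of_tendsto_of_tendsto_of_le_of_le tendsto_const_nhds hV0 (fun _ => zero_le)
    fun i => measure_mono fun ω hω hmem => hω (hVU hmem)

theorem ae_tendsto_of_forall_lt_of_forall_gt [TopologicalSpace α] [LinearOrder α]
    [OrderTopology α] [DenselyOrdered α] [TopologicalSpace.SeparableSpace α]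
    (hlt : ∀ a < L, ∀ᵐ ω ∂μ, ∀ᶠ i in l, a < Z i ω)
    (hgt : ∀ b > L, ∀ᵐ ω ∂μ, ∀ᶠ i in l, Z i ω < b) :
    ∀ᵐ ω ∂μ, Tendsto (Z · ω) l (𝓝 L) := by
  obtain ⟨D, hDc, hD⟩ := TopologicalSpace.exists_countable_dense α
  have hlt' := (ae_ball_iff (hDc.mono inter_subset_left)).2 fun a (ha : a ∈ D ∩ Iio L) =>
    hlt a ha.2
  have hgt' := (ae_ball_iff (hDc.mono inter_subset_left)).2 fun b (hb : b ∈ D ∩ Ioi L) =>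
    hgt b hb.2
  filter_upwards [hlt', hgt'] with ω hω₁ hω₂
  refine tendsto_order.2 ⟨fun a ha => ?_, fun b hb => ?_⟩
  · obtain ⟨d, hdD, had, hdL⟩ := hD.exists_between ha
    exact (hω₁ d ⟨hdD, hdL⟩).mono fun i hi => had.trans hi
  · obtain ⟨d, hdD, hLd, hdb⟩ := hD.exists_between hb
    exact (hω₂ d ⟨hdD, hLd⟩).mono fun i hi => hi.trans hdb

theorem ae_eventually_notMem_of_summable [IsFiniteMeasure μ] {s : ℕ → Set Ω} {g : ℕ → ℝ}
    (hg : Summable g) (hs : ∀ᶠ j in atTop, μ.real (s j) ≤ g j) :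
    ∀ᵐ ω ∂μ, ∀ᶠ j in atTop, ω ∉ s j := by
  have hsum : Summable fun j => μ.real (s j) :=
    hg.of_norm_bounded_eventually_nat <| hs.mono fun j hj => by
      rwa [Real.norm_eq_abs, abs_of_nonneg measureReal_nonneg]
  refine ae_eventually_notMem ?_
  have hreal : ∀ j, ENNReal.ofReal (μ.real (s j)) = μ (s j) := fun j => ofReal_measureReal
  rw [← tsum_congr hreal, ← ENNReal.ofReal_tsum_of_nonneg (fun _ => measureReal_nonneg) hsum]
  exact ENNReal.ofReal_ne_top

end Convergence

namespace Real

lemma one_sub_pow_le_exp_neg_mul {p : ℝ} (hp : p ≤ 1) (n : ℕ) :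
    (1 - p) ^ n ≤ exp (-(n * p)) := by
  calc (1 - p) ^ n ≤ exp (-p) ^ n :=
        pow_le_pow_left₀ (by linarith) (one_sub_le_exp_neg p) n
    _ = exp (-(n * p)) := by rw [← exp_nat_mul]; ring_nf

lemma exp_neg_le_inv {x : ℝ} (hx : 0 < x) : exp (-x) ≤ x⁻¹ := by
  rw [exp_neg]
  exact inv_anti₀ hx ((lt_add_one x).le.trans (add_one_le_exp x))

lemma exp_natCast_mul_log_two (j : ℕ) : exp (j * log 2) = 2 ^ j := by
  rw [exp_nat_mul, exp_log two_pos]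

end Real

lemma Nat.tendsto_log_two_atTop : Tendsto (Nat.log 2) atTop atTop :=
  tendsto_atTop_atTop.2 fun j => ⟨2 ^ j, fun _ hn => Nat.le_log_of_pow_le one_lt_two hn⟩

section Log

lemma one_le_Log (x : ℝ) : 1 ≤ Log x := by
  rw [Log, Real.le_log_iff_exp_le (by positivity)]
  exact le_max_left _ _

lemma Log_pos (x : ℝ) : 0 < Log x := one_pos.trans_le (one_le_Log x)

lemma monotone_Log : Monotone Log := fun _ _ h =>
  Real.log_le_log (by positivity) (max_le_max le_rfl h)

lemma measurable_Log : Measurable Log :=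
  Real.measurable_log.comp (measurable_const.max measurable_id)

lemma le_Log_of_exp_le {u x : ℝ} (h : Real.exp u ≤ x) : u ≤ Log x := by
  rw [Log, Real.le_log_iff_exp_le (by positivity)]
  exact h.trans (le_max_right _ _)

lemma Log_le_of_le_exp {u x : ℝ} (hu : 1 ≤ u) (h : x ≤ Real.exp u) : Log x ≤ u := by
  rw [Log, Real.log_le_iff_le_exp (by positivity)]
  exact max_le (Real.exp_le_exp.2 hu) h

end Log

section Maximum

variable {Ω : Type*} {X : ℕ → Ω → ℝ} {n : ℕ} {ω : Ω}

lemma pmax_le_iff (hn : n ≠ 0) {v : ℝ} : pmax X n ω ≤ v ↔ ∀ k < n, X k ω ≤ v := by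
  simp [pmax, hn, Finset.sup'_le_iff]

lemma le_pmax {k : ℕ} (hk : k < n) : X k ω ≤ pmax X n ω :=
  (pmax_le_iff (Nat.ne_zero_of_lt hk)).1 le_rfl k hk

lemma monotone_pmax : Monotone (pmax X · ω) := by
  intro m n hmn
  rcases Nat.eq_zero_or_pos m with rfl | hm
  · rcases Nat.eq_zero_or_pos n with rfl | hn
    · rfl
    · simpa [pmax] using le_pmax hn
  · exact (pmax_le_iff hm.ne').2 fun k hk => le_pmax (hk.trans_le hmn)

lemma Log_pmax_le_iff (hn : n ≠ 0) {u : ℝ} :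
    Log (pmax X n ω) ≤ u ↔ ∀ k < n, Log (X k ω) ≤ u := by
  refine ⟨fun h k hk => (monotone_Log (le_pmax hk)).trans h, fun h => ?_⟩
  obtain ⟨k, hk, hmax⟩ := Finset.exists_mem_eq_sup' (Finset.nonempty_range_iff.mpr hn)
    fun k => X k ω
  rw [pmax, dif_neg hn, hmax]
  exact h k (Finset.mem_range.1 hk)

lemma measurable_pmax [MeasurableSpace Ω] (hX : ∀ k, Measurable (X k)) :
    Measurable (pmax X n) := by
  unfold pmax
  split_ifs with hn
  · exact hX 0
  · convert Finset.measurable_sup' (Finset.nonempty_range_iff.mpr hn) fun k _ => hX k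
    simp [Finset.sup'_apply]

end Maximum

noncomputable def logTail {Ω : Type*} [MeasurableSpace Ω] (μ : Measure Ω) (Y : Ω → ℝ) (u : ℝ) :
    ℝ :=
  μ.real {ω | u < Log (Y ω)}

section Tail

variable {Ω : Type*} [MeasurableSpace Ω] {μ : Measure Ω} [IsProbabilityMeasure μ]
  {Y : Ω → ℝ}

lemma antitone_logTail : Antitone (logTail μ Y) := fun _ _ h =>
  measureReal_mono fun _ hω => h.trans_lt hω

lemma logTail_le_one (u : ℝ) : logTail μ Y u ≤ 1 := measureReal_le_one

end Tail

lemma eventually_le_two_mul_exp_neg {T : ℝ → ℝ} (hT : Antitone T) {a : ℝ} (ha : 0 ≤ a)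
    (h : ∀ᶠ n : ℕ in atTop, n * T (a * Log n) ≤ 1) :
    ∀ᶠ u in atTop, T (a * u) ≤ 2 * Real.exp (-u) := by
  have hfloor : Tendsto (fun u => ⌊Real.exp u⌋₊) atTop atTop :=
    tendsto_nat_floor_atTop.comp Real.tendsto_exp_atTop
  filter_upwards [hfloor.eventually h, eventually_ge_atTop 1] with u hu hu1
  set n := ⌊Real.exp u⌋₊
  have hn : Real.exp u / 2 ≤ n := by
    linarith [Nat.lt_floor_add_one (Real.exp u), Real.add_one_le_exp u]
  have hn0 : 0 < (n : ℝ) := by linarith [Real.exp_pos u]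
  have hLog : Log n ≤ u := Log_le_of_le_exp hu1 (Nat.floor_le (Real.exp_pos u).le)
  calc T (a * u) ≤ T (a * Log n) := hT (mul_le_mul_of_nonneg_left hLog ha)
    _ ≤ 1 / n := by rw [le_div_iff₀ hn0]; linarith
    _ ≤ 2 * Real.exp (-u) := by
      rw [div_le_iff₀ hn0, Real.exp_neg]
      field_simp
      linarith

lemma eventually_exp_neg_div_four_le {T : ℝ → ℝ} (hT : Antitone T) {b : ℝ} (hb : 0 ≤ b)
    (h : ∀ᶠ n : ℕ in atTop, 1 / 2 ≤ n * T (b * Log n)) :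
    ∀ᶠ u in atTop, Real.exp (-u) / 4 ≤ T (b * u) := by
  have hceil : Tendsto (fun u => ⌈Real.exp u⌉₊) atTop atTop :=
    tendsto_nat_ceil_atTop.comp Real.tendsto_exp_atTop
  filter_upwards [hceil.eventually h, eventually_ge_atTop 0] with u hu hu0
  set n := ⌈Real.exp u⌉₊
  have hn : (n : ℝ) ≤ 2 * Real.exp u := by
    linarith [Nat.ceil_lt_add_one (Real.exp_pos u).le, Real.one_le_exp hu0]
  have hn0 : 0 < (n : ℝ) := (Real.exp_pos u).trans_le (Nat.le_ceil _)
  have hLog : u ≤ Log n := le_Log_of_exp_le (Nat.le_ceil _)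
  calc Real.exp (-u) / 4 ≤ 1 / (2 * n) := by
        rw [Real.exp_neg, div_le_div_iff₀ (by positivity) (by positivity)]
        field_simp
        linarith
    _ ≤ T (b * Log n) := by rw [div_le_iff₀ (by positivity)]; linarith
    _ ≤ T (b * u) := hT (mul_le_mul_of_nonneg_left hLog hb)

section Dyadic

variable {f : ℕ → ℝ}

lemma eventually_le_mul_Log_of_two_pow (hf : Monotone f) {b : ℝ} (hb : 0 ≤ b)
    (h : ∀ᶠ j : ℕ in atTop, f (2 ^ (j + 1)) ≤ b * (j * Real.log 2)) :
    ∀ᶠ n : ℕ in atTop, f n ≤ b * Log n := by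
  filter_upwards [Nat.tendsto_log_two_atTop.eventually h, eventually_ne_atTop 0] with n hn hn0
  set j := Nat.log 2 n
  have hLog : j * Real.log 2 ≤ Log n := by
    refine le_Log_of_exp_le ?_
    rw [Real.exp_natCast_mul_log_two]
    exact_mod_cast Nat.pow_log_le_self 2 hn0
  calc f n ≤ f (2 ^ (j + 1)) := hf (Nat.lt_pow_succ_log_self one_lt_two n).le
    _ ≤ b * (j * Real.log 2) := hn
    _ ≤ b * Log n := mul_le_mul_of_nonneg_left hLog hb

lemma eventually_mul_Log_lt_of_two_pow (hf : Monotone f) {a : ℝ} (ha : 0 ≤ a)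
    (h : ∀ᶠ j : ℕ in atTop, a * ((j + 1) * Real.log 2) < f (2 ^ j)) :
    ∀ᶠ n : ℕ in atTop, a * Log n < f n := by
  filter_upwards [Nat.tendsto_log_two_atTop.eventually (h.and (eventually_ge_atTop 1)),
    eventually_ne_atTop 0] with n ⟨hn, hj1⟩ hn0
  set j := Nat.log 2 n
  have hLog : Log n ≤ (j + 1) * Real.log 2 := by
    refine Log_le_of_le_exp ?_ ?_
    · have : (1 : ℝ) ≤ j := by exact_mod_cast hj1
      nlinarith [Real.log_two_gt_d9]
    · rw [← Nat.cast_add_one, Real.exp_natCast_mul_log_two]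
      exact_mod_cast (Nat.lt_pow_succ_log_self one_lt_two n).le
  calc a * Log n ≤ a * ((j + 1) * Real.log 2) := mul_le_mul_of_nonneg_left hLog ha
    _ < f (2 ^ j) := hn
    _ ≤ f n := hf (Nat.pow_log_le_self 2 hn0)

end Dyadic

lemma measureReal_setOf_le_eq_one_sub {Ω : Type*} [MeasurableSpace Ω] {μ : Measure Ω}
    [IsProbabilityMeasure μ] {f : Ω → ℝ} (hf : Measurable f) (u : ℝ) :
    μ.real {ω | f ω ≤ u} = 1 - μ.real {ω | u < f ω} := by
  rw [← probReal_compl_eq_one_sub (measurableSet_lt measurable_const hf)]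
  congr 1
  ext ω
  simp

lemma measureReal_lt_Log_pmax_le {Ω : Type*} [MeasurableSpace Ω] {μ : Measure Ω}
    {X : ℕ → Ω → ℝ} {n : ℕ} (hident : ∀ n, IdentDistrib (X n) (X 0) μ μ) (hn : n ≠ 0)
    (u : ℝ) : μ.real {ω | u < Log (pmax X n ω)} ≤ n * logTail μ (X 0) u := by
  have hS : MeasurableSet {x : ℝ | u < Log x} := measurableSet_lt measurable_const measurable_Log
  have hset : {ω | u < Log (pmax X n ω)} = ⋃ k ∈ Finset.range n, X k ⁻¹' {x | u < Log x} := by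
    ext ω
    simpa [not_le] using (Log_pmax_le_iff (X := X) (ω := ω) hn (u := u)).not
  have hk : ∀ k, μ.real (X k ⁻¹' {x | u < Log x}) = logTail μ (X 0) u := fun k => by
    simp only [measureReal_def, (hident k).measure_mem_eq hS]
    rfl
  calc μ.real {ω | u < Log (pmax X n ω)}
      ≤ ∑ k ∈ Finset.range n, μ.real (X k ⁻¹' {x | u < Log x}) := by
        rw [hset]; exact measureReal_biUnion_finset_le _ _
    _ = n * logTail μ (X 0) u := by
        rw [Finset.sum_congr rfl fun k _ => hk k, Finset.sum_const, Finset.card_range,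
          nsmul_eq_mul]

section IID

variable {Ω : Type*} [MeasurableSpace Ω] {μ : Measure Ω} [IsProbabilityMeasure μ]
  {X : ℕ → Ω → ℝ} {n : ℕ}

lemma measureReal_Log_pmax_le (hmeas : ∀ n, Measurable (X n)) (hindep : iIndepFun X μ)
    (hident : ∀ n, IdentDistrib (X n) (X 0) μ μ) (hn : n ≠ 0) (u : ℝ) :
    μ.real {ω | Log (pmax X n ω) ≤ u} = (1 - logTail μ (X 0) u) ^ n := by
  have hS : MeasurableSet {x : ℝ | Log x ≤ u} := measurableSet_le measurable_Log measurable_const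
  have hset : {ω | Log (pmax X n ω) ≤ u} = ⋂ k ∈ Finset.range n, X k ⁻¹' {x | Log x ≤ u} := by
    ext ω
    simp [Log_pmax_le_iff hn]
  have hk : ∀ k, μ.real (X k ⁻¹' {x | Log x ≤ u}) = 1 - logTail μ (X 0) u := fun k => by
    simp only [measureReal_def, (hident k).measure_mem_eq hS]
    exact measureReal_setOf_le_eq_one_sub (measurable_Log.comp (hmeas 0)) u
  rw [hset, measureReal_def, hindep.meas_biInter fun k _ => ⟨_, hS, rfl⟩, ENNReal.toReal_prod]
  change ∏ k ∈ Finset.range n, μ.real (X k ⁻¹' _) = _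
  rw [Finset.prod_congr rfl fun k _ => hk k, Finset.prod_const, Finset.card_range]

lemma measureReal_lt_Log_pmax (hmeas : ∀ n, Measurable (X n)) (hindep : iIndepFun X μ)
    (hident : ∀ n, IdentDistrib (X n) (X 0) μ μ) (hn : n ≠ 0) (u : ℝ) :
    μ.real {ω | u < Log (pmax X n ω)} = 1 - (1 - logTail μ (X 0) u) ^ n := by
  rw [← measureReal_Log_pmax_le hmeas hindep hident hn,
    measureReal_setOf_le_eq_one_sub (f := fun ω => Log (pmax X n ω))
      (measurable_Log.comp (measurable_pmax hmeas))]
  ring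

lemma eventually_natCast_mul_logTail_le_one (hmeas : ∀ n, Measurable (X n))
    (hindep : iIndepFun X μ) (hident : ∀ n, IdentDistrib (X n) (X 0) μ μ) {a : ℝ}
    (h : Tendsto (fun n : ℕ => μ {ω | a * Log n < Log (pmax X n ω)}) atTop (𝓝 0)) :
    ∀ᶠ n : ℕ in atTop, n * logTail μ (X 0) (a * Log n) ≤ 1 := by
  have hreal := (ENNReal.tendsto_toReal ENNReal.zero_ne_top).comp h
  have hlt : (0 : ℝ) < 1 - Real.exp (-1) := by
    linarith [Real.exp_lt_one_iff.2 (neg_one_lt_zero : (-1 : ℝ) < 0)]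
  filter_upwards [hreal.eventually_lt_const hlt, eventually_ne_atTop 0] with n hn hn0
  rw [Function.comp_apply, ← measureReal_def, measureReal_lt_Log_pmax hmeas hindep hident hn0]
    at hn
  have hexp := Real.one_sub_pow_le_exp_neg_mul (logTail_le_one (μ := μ) (Y := X 0) (a * Log n)) n
  have := Real.exp_lt_exp.1 ((by linarith : Real.exp (-1) < _).trans_le hexp)
  linarith

lemma eventually_one_half_le_natCast_mul_logTail (hmeas : ∀ n, Measurable (X n))
    (hindep : iIndepFun X μ) (hident : ∀ n, IdentDistrib (X n) (X 0) μ μ) {b : ℝ}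
    (h : Tendsto (fun n : ℕ => μ {ω | Log (pmax X n ω) ≤ b * Log n}) atTop (𝓝 0)) :
    ∀ᶠ n : ℕ in atTop, 1 / 2 ≤ n * logTail μ (X 0) (b * Log n) := by
  have hreal := (ENNReal.tendsto_toReal ENNReal.zero_ne_top).comp h
  filter_upwards [hreal.eventually_lt_const one_half_pos, eventually_ne_atTop 0] with n hn hn0
  rw [Function.comp_apply, ← measureReal_def, measureReal_Log_pmax_le hmeas hindep hident hn0]
    at hn
  have := one_add_mul_le_pow (a := -logTail μ (X 0) (b * Log n))
    (by linarith [logTail_le_one (μ := μ) (Y := X 0) (b * Log n)]) n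
  rw [← sub_eq_add_neg] at this
  linarith

end IID

section BorelCantelli

variable {Ω : Type*} [MeasurableSpace Ω] {μ : Measure Ω} [IsProbabilityMeasure μ]
  {X : ℕ → Ω → ℝ} {a b : ℝ}

lemma ae_eventually_Log_pmax_two_pow_le (hident : ∀ n, IdentDistrib (X n) (X 0) μ μ)
    (ha : 0 < a) (hab : a < b)
    (hT : ∀ᶠ u in atTop, logTail μ (X 0) (a * u) ≤ 2 * Real.exp (-u)) :
    ∀ᵐ ω ∂μ, ∀ᶠ j : ℕ in atTop, Log (pmax X (2 ^ (j + 1)) ω) ≤ b * (j * Real.log 2) := by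
  set c := b / a * Real.log 2 with hc_def
  -- `r = 2 ^ (1 - b / a)`
  set r := 2 * Real.exp (-c) with hr_def
  have hc : Real.log 2 < c := lt_mul_left (Real.log_pos one_lt_two) ((one_lt_div ha).2 hab)
  have hr : r < 1 := by
    have := Real.exp_lt_exp.2 hc
    rw [Real.exp_log two_pos] at this
    rw [hr_def, Real.exp_neg, ← div_eq_mul_inv, div_lt_one (Real.exp_pos c)]
    exact this
  have hcj : Tendsto (fun j : ℕ => c * j) atTop atTop :=
    tendsto_natCast_atTop_atTop.const_mul_atTop ((Real.log_pos one_lt_two).trans hc)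
  have hbad := ae_eventually_notMem_of_summable (μ := μ)
    (s := fun j : ℕ => {ω | b * (j * Real.log 2) < Log (pmax X (2 ^ (j + 1)) ω)})
    ((summable_geometric_of_lt_one (by positivity) hr).mul_left 4) <| by
      filter_upwards [hcj.eventually hT] with j hj
      have hac : a * (c * j) = b * (j * Real.log 2) := by rw [hc_def]; field_simp
      rw [hac] at hj
      calc μ.real {ω | b * (j * Real.log 2) < Log (pmax X (2 ^ (j + 1)) ω)}
          ≤ (2 ^ (j + 1) : ℕ) * logTail μ (X 0) (b * (j * Real.log 2)) :=
            measureReal_lt_Log_pmax_le hident (by positivity) _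
        _ ≤ 2 ^ (j + 1) * (2 * Real.exp (-(c * j))) := by push_cast; gcongr
        _ = 4 * r ^ j := by
            rw [show -(c * j) = j * -c by ring, Real.exp_nat_mul, mul_pow, pow_succ]
            ring
  filter_upwards [hbad] with ω hω
  filter_upwards [hω] with j hj
  simpa using hj

lemma ae_eventually_lt_Log_pmax_two_pow (hmeas : ∀ n, Measurable (X n))
    (hindep : iIndepFun X μ) (hident : ∀ n, IdentDistrib (X n) (X 0) μ μ)
    (ha : 0 < a) (hab : a < b)
    (hT : ∀ᶠ u in atTop, Real.exp (-u) / 4 ≤ logTail μ (X 0) (b * u)) :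
    ∀ᵐ ω ∂μ, ∀ᶠ j : ℕ in atTop, a * ((j + 1) * Real.log 2) < Log (pmax X (2 ^ j) ω) := by
  have hb : 0 < b := ha.trans hab
  set c := a / b * Real.log 2 with hc_def
  -- `s = 2 ^ (1 - a / b)`
  set s := 2 * Real.exp (-c) with hs_def
  set K := Real.exp (-c) / 4 with hK_def
  have hc : c < Real.log 2 :=
    mul_lt_of_lt_one_left (Real.log_pos one_lt_two) ((div_lt_one hb).2 hab)
  have hs : 1 < s := by
    have := Real.exp_lt_exp.2 hc
    rw [Real.exp_log two_pos] at this
    rw [hs_def, Real.exp_neg, ← div_eq_mul_inv, one_lt_div (Real.exp_pos c)]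
    exact this
  have hcj : Tendsto (fun j : ℕ => c * (j + 1)) atTop atTop :=
    (tendsto_natCast_atTop_atTop.atTop_add tendsto_const_nhds).const_mul_atTop
      (mul_pos (div_pos ha hb) (Real.log_pos one_lt_two))
  have hbad := ae_eventually_notMem_of_summable (μ := μ)
    (s := fun j : ℕ => {ω | Log (pmax X (2 ^ j) ω) ≤ a * ((j + 1) * Real.log 2)})
    ((summable_geometric_of_lt_one (by positivity) (inv_lt_one_of_one_lt₀ hs)).mul_left K⁻¹) <| by
      filter_upwards [hcj.eventually hT] with j hj
      have hbc : b * (c * (j + 1)) = a * ((j + 1) * Real.log 2) := by rw [hc_def]; field_simp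
      rw [hbc] at hj
      set p := logTail μ (X 0) (a * ((j + 1) * Real.log 2))
      have hKs : K * s ^ j ≤ (2 ^ j : ℕ) * p := by
        calc K * s ^ j = 2 ^ j * (Real.exp (-(c * (j + 1))) / 4) := by
              rw [show -(c * (j + 1)) = j * -c + -c by ring, Real.exp_add, Real.exp_nat_mul,
                mul_pow]
              ring
          _ ≤ (2 ^ j : ℕ) * p := by push_cast; gcongr
      have hKs0 : 0 < K * s ^ j := by positivity
      calc μ.real {ω | Log (pmax X (2 ^ j) ω) ≤ a * ((j + 1) * Real.log 2)}
          = (1 - p) ^ 2 ^ j := measureReal_Log_pmax_le hmeas hindep hident (by positivity) _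
        _ ≤ Real.exp (-((2 ^ j : ℕ) * p)) := Real.one_sub_pow_le_exp_neg_mul (logTail_le_one _) _
        _ ≤ ((2 ^ j : ℕ) * p)⁻¹ := Real.exp_neg_le_inv (hKs0.trans_le hKs)
        _ ≤ (K * s ^ j)⁻¹ := inv_anti₀ hKs0 hKs
        _ = K⁻¹ * s⁻¹ ^ j := by rw [mul_inv, inv_pow]
  filter_upwards [hbad] with ω hω
  filter_upwards [hω] with j hj
  simpa using hj

end BorelCantelli

section Limit

variable {Ω : Type*} [MeasurableSpace Ω] {μ : Measure Ω} [IsProbabilityMeasure μ]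
  {X : ℕ → Ω → ℝ} {a b : ℝ}

lemma ae_eventually_Log_pmax_le_mul_Log (hmeas : ∀ n, Measurable (X n))
    (hindep : iIndepFun X μ) (hident : ∀ n, IdentDistrib (X n) (X 0) μ μ)
    (ha : 0 < a) (hab : a < b)
    (h : Tendsto (fun n : ℕ => μ {ω | a * Log n < Log (pmax X n ω)}) atTop (𝓝 0)) :
    ∀ᵐ ω ∂μ, ∀ᶠ n : ℕ in atTop, Log (pmax X n ω) ≤ b * Log n := by
  have hT := eventually_le_two_mul_exp_neg antitone_logTail ha.le
    (eventually_natCast_mul_logTail_le_one hmeas hindep hident h)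
  filter_upwards [ae_eventually_Log_pmax_two_pow_le hident ha hab hT] with ω hω
  exact eventually_le_mul_Log_of_two_pow (monotone_Log.comp monotone_pmax) (ha.trans hab).le hω

lemma ae_eventually_mul_Log_lt_Log_pmax (hmeas : ∀ n, Measurable (X n))
    (hindep : iIndepFun X μ) (hident : ∀ n, IdentDistrib (X n) (X 0) μ μ)
    (ha : 0 < a) (hab : a < b)
    (h : Tendsto (fun n : ℕ => μ {ω | Log (pmax X n ω) ≤ b * Log n}) atTop (𝓝 0)) :
    ∀ᵐ ω ∂μ, ∀ᶠ n : ℕ in atTop, a * Log n < Log (pmax X n ω) := by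
  have hT := eventually_exp_neg_div_four_le antitone_logTail (ha.trans hab).le
    (eventually_one_half_le_natCast_mul_logTail hmeas hindep hident h)
  filter_upwards [ae_eventually_lt_Log_pmax_two_pow hmeas hindep hident ha hab hT] with ω hω
  exact eventually_mul_Log_lt_of_two_pow (monotone_Log.comp monotone_pmax) ha.le hω

variable {L d : ℝ≥0∞}

lemma ae_eventually_lt_ofReal_Log_pmax_div (hmeas : ∀ n, Measurable (X n))
    (hindep : iIndepFun X μ) (hident : ∀ n, IdentDistrib (X n) (X 0) μ μ)
    (hP : ∀ U ∈ 𝓝 L, Tendsto (fun n : ℕ =>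
      μ {ω | ENNReal.ofReal (Log (pmax X n ω) / Log n) ∉ U}) atTop (𝓝 0))
    (hd : d < L) :
    ∀ᵐ ω ∂μ, ∀ᶠ n : ℕ in atTop, d < ENNReal.ofReal (Log (pmax X n ω) / Log n) := by
  obtain ⟨a, -, hda, haL⟩ := ENNReal.lt_iff_exists_real_btwn.1 hd
  obtain ⟨b, -, hab, hbL⟩ := ENNReal.lt_iff_exists_real_btwn.1 haL
  have hlow : Tendsto (fun n : ℕ => μ {ω | Log (pmax X n ω) ≤ b * Log n}) atTop (𝓝 0) :=
    tendsto_of_tendsto_of_tendsto_of_le_of_le tendsto_const_nhds (hP _ (Ioi_mem_nhds hbL))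
      (fun _ => zero_le) fun n => measure_mono fun ω hω => not_lt.2 <|
        ENNReal.ofReal_le_ofReal ((div_le_iff₀ (Log_pos _)).2 hω)
  filter_upwards [ae_eventually_mul_Log_lt_Log_pmax hmeas hindep hident
    (ENNReal.ofReal_pos.1 (pos_of_gt hda)) (ENNReal.ofReal_lt_ofReal_iff'.1 hab).1 hlow]
    with ω hω
  filter_upwards [hω] with n hn
  exact hda.trans_le (ENNReal.ofReal_le_ofReal ((lt_div_iff₀ (Log_pos _)).2 hn).le)

lemma ae_eventually_ofReal_Log_pmax_div_lt (hmeas : ∀ n, Measurable (X n))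
    (hindep : iIndepFun X μ) (hident : ∀ n, IdentDistrib (X n) (X 0) μ μ)
    (hP : ∀ U ∈ 𝓝 L, Tendsto (fun n : ℕ =>
      μ {ω | ENNReal.ofReal (Log (pmax X n ω) / Log n) ∉ U}) atTop (𝓝 0))
    (hd : L < d) :
    ∀ᵐ ω ∂μ, ∀ᶠ n : ℕ in atTop, ENNReal.ofReal (Log (pmax X n ω) / Log n) < d := by
  obtain ⟨a, -, hLa, had⟩ := ENNReal.lt_iff_exists_real_btwn.1 hd
  obtain ⟨b, -, hab, hbd⟩ := ENNReal.lt_iff_exists_real_btwn.1 had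
  have hup : Tendsto (fun n : ℕ => μ {ω | a * Log n < Log (pmax X n ω)}) atTop (𝓝 0) :=
    tendsto_of_tendsto_of_tendsto_of_le_of_le tendsto_const_nhds (hP _ (Iio_mem_nhds hLa))
      (fun _ => zero_le) fun n => measure_mono fun ω hω => not_lt.2 <|
        ENNReal.ofReal_le_ofReal ((lt_div_iff₀ (Log_pos _)).2 hω).le
  filter_upwards [ae_eventually_Log_pmax_le_mul_Log hmeas hindep hident
    (ENNReal.ofReal_pos.1 (pos_of_gt hLa)) (ENNReal.ofReal_lt_ofReal_iff'.1 hab).1 hup]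
    with ω hω
  filter_upwards [hω] with n hn
  exact (ENNReal.ofReal_le_ofReal ((div_le_iff₀ (Log_pos _)).2 hn)).trans_lt hbd

end Limit

theorem stmt9 {Ω : Type*} [MeasurableSpace Ω] (μ : Measure Ω) [IsProbabilityMeasure μ]
    (X : ℕ → Ω → ℝ) (hmeas : ∀ n, Measurable (X n))
    (hindep : iIndepFun X μ)
    (hident : ∀ n, IdentDistrib (X n) (X 0) μ μ)
    (ρ : ℝ≥0∞) :
    (∀ᵐ ω ∂μ,
        Tendsto (fun n : ℕ => ENNReal.ofReal (Log (pmax X n ω) / Log n)) atTop (nhds ρ⁻¹)) ↔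
    (∀ U ∈ nhds ρ⁻¹,
        Tendsto (fun n : ℕ =>
          μ {ω | ENNReal.ofReal (Log (pmax X n ω) / Log n) ∉ U}) atTop (nhds 0)) := by
  have hZ : ∀ n, Measurable fun ω => ENNReal.ofReal (Log (pmax X n ω) / Log n) := fun n =>
    ENNReal.measurable_ofReal.comp ((measurable_Log.comp (measurable_pmax hmeas)).div_const _)
  refine ⟨fun h U hU => tendsto_measure_setOf_notMem_of_ae_tendsto hZ h hU, fun hP => ?_⟩
  exact ae_tendsto_of_forall_lt_of_forall_gt
    (fun d hd => ae_eventually_lt_ofReal_Log_pmax_div hmeas hindep hident hP hd)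
    (fun d hd => ae_eventually_ofReal_Log_pmax_div_lt hmeas hindep hident hP hd)
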